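/- arXiv:0803.0302 — 3 statements merged into one kernel-verified Lean document; each statement's English description precedes it below -/
import Mathlib

section
/- For all n ≥ 1, the number of assignments of n drivers to n spaces such that at least n-1 drivers fail to park equals 1, and the number such that all n drivers fail to park equals 0. -/
open Finset

/-- One step of the linear parking process: the driver with choice `c` takes the
first free space with index at least `c`, if any; otherwise the failure count increases. -/
def parkStep {n : ℕ} (p : Finset (Fin n) × ℕ) (c : Fin n) : Finset (Fin n) × ℕ :=
  if h : ((Finset.univ \ p.1).filter (fun x => c ≤ x)).Nonempty then
    (insert (((Finset.univ \ p.1).filter (fun x => c ≤ x)).min' h) p.1, p.2)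
  else
    (p.1, p.2 + 1)

/-- The set of occupied spaces and the number of drivers who fail to park,
when drivers `0, 1, ..., m-1` with choices `f 0, f 1, ..., f (m-1)` arrive in order. -/
def parkRun {n m : ℕ} (f : Fin m → Fin n) : Finset (Fin n) × ℕ :=
  (List.ofFn f).foldl parkStep (∅, 0)

/-- The defect of an assignment: the number of drivers who fail to park. -/
def defect {n m : ℕ} (f : Fin m → Fin n) : ℕ := (parkRun f).2

/-- `cp n m k` is the number of assignments of `m` drivers to `n` spaces
under which exactly `k` drivers fail to park. -/
def cp (n m k : ℕ) : ℕ :=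
  (Finset.univ.filter (fun f : Fin m → Fin n => defect f = k)).card

/-!
Each driver either occupies one new space or adds one to the defect, so the defect of `m` drivers
is `m` minus the number of occupied spaces. The first driver always parks, so the defect is at
most `m - 1`, with equality exactly when the occupied set never grows beyond the first driver's
space, i.e. every later driver fails. A driver with choice `c` fails only when all spaces `≥ c`,
the last one among them, are taken; with a single occupied space this forces every choice to be
the last space.
-/

variable {n : ℕ}

section parkStep

variable (p : Finset (Fin n) × ℕ) (c : Fin n)

lemma parkStep_fst_card_add_snd :
    (parkStep p c).1.card + (parkStep p c).2 = p.1.card + p.2 + 1 := by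
  unfold parkStep
  split_ifs with h
  · have hfree := (Finset.mem_filter.mp (Finset.min'_mem _ h)).1
    rw [Finset.card_insert_of_notMem (Finset.mem_sdiff.mp hfree).2]
    ring
  · rfl

lemma subset_parkStep_fst : p.1 ⊆ (parkStep p c).1 := by
  unfold parkStep
  split_ifs
  exacts [Finset.subset_insert _ _, subset_rfl]

lemma parkStep_fst_eq_iff : (parkStep p c).1 = p.1 ↔ ∀ x, c ≤ x → x ∈ p.1 := by
  unfold parkStep
  split_ifs with h
  · have hfree := (Finset.mem_filter.mp (Finset.min'_mem _ h)).1
    obtain ⟨x, hx⟩ := h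
    simp only [Finset.mem_filter, Finset.mem_sdiff, Finset.mem_univ, true_and] at hx hfree
    simp only [Finset.insert_eq_self, hfree, false_iff, not_forall]
    exact ⟨x, hx.2, hx.1⟩
  · simp only [Finset.not_nonempty_iff_eq_empty, Finset.filter_eq_empty_iff, Finset.mem_sdiff,
      Finset.mem_univ, true_and, not_imp_comm] at h
    simpa using h

lemma parkStep_empty (k : ℕ) : parkStep (∅, k) c = ({c}, k) := by
  have h : ((Finset.univ \ (∅ : Finset (Fin n))).filter (fun x => c ≤ x)).Nonempty := ⟨c, by simp⟩
  have hmin : ((Finset.univ \ (∅ : Finset (Fin n))).filter (fun x => c ≤ x)).min' h = c :=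
    le_antisymm (Finset.min'_le _ c (by simp)) (Finset.le_min' _ _ _ (by simp))
  simp only [parkStep, dif_pos h, hmin, insert_empty_eq]

end parkStep

section foldl

variable (l : List (Fin n))

lemma foldl_parkStep_card_add_snd (p : Finset (Fin n) × ℕ) :
    (l.foldl parkStep p).1.card + (l.foldl parkStep p).2 = p.1.card + p.2 + l.length := by
  induction l generalizing p with
  | nil => rfl
  | cons c l ih =>
    rw [List.foldl_cons, ih, parkStep_fst_card_add_snd, List.length_cons]
    ring

lemma subset_foldl_parkStep_fst (p : Finset (Fin n) × ℕ) : p.1 ⊆ (l.foldl parkStep p).1 := by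
  induction l generalizing p with
  | nil => exact subset_rfl
  | cons c l ih => exact (subset_parkStep_fst p c).trans (ih _)

lemma foldl_parkStep_fst_eq_iff (p : Finset (Fin n) × ℕ) :
    (l.foldl parkStep p).1 = p.1 ↔ ∀ c ∈ l, ∀ x, c ≤ x → x ∈ p.1 := by
  induction l generalizing p with
  | nil => simp
  | cons c l ih =>
    rw [List.foldl_cons, List.forall_mem_cons, ← parkStep_fst_eq_iff]
    constructor
    · intro h
      have hstep : (parkStep p c).1 = p.1 :=
        (subset_parkStep_fst p c).antisymm' (h ▸ subset_foldl_parkStep_fst l _)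
      exact ⟨hstep, hstep ▸ (ih _).mp (h.trans hstep.symm)⟩
    · rintro ⟨hstep, hl⟩
      exact ((ih _).mpr (hstep ▸ hl)).trans hstep

end foldl

lemma Fin.forall_le_imp_eq_iff (a c : Fin (n + 1)) :
    (∀ x, c ≤ x → x = a) ↔ a = Fin.last n ∧ c = Fin.last n := by
  constructor
  · intro h
    have ha := h _ (Fin.le_last c)
    exact ⟨ha.symm, (h c le_rfl).trans ha.symm⟩
  · rintro ⟨rfl, rfl⟩ x hx
    exact Fin.last_le_iff.mp hx

section parkRun

variable {m : ℕ}

lemma parkRun_succ (f : Fin (m + 1) → Fin n) :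
    parkRun f = (List.ofFn (Fin.tail f)).foldl parkStep ({f 0}, 0) := by
  rw [parkRun, List.ofFn_succ, List.foldl_cons, parkStep_empty]
  rfl

lemma defect_add_card_parkRun (f : Fin m → Fin n) : defect f + (parkRun f).1.card = m := by
  have h := foldl_parkStep_card_add_snd (List.ofFn f) (∅, 0)
  simp only [Finset.card_empty, List.length_ofFn, zero_add] at h
  rw [defect, parkRun]
  omega

lemma singleton_subset_parkRun_fst (f : Fin (m + 1) → Fin n) : {f 0} ⊆ (parkRun f).1 := by
  rw [parkRun_succ]
  exact subset_foldl_parkStep_fst _ ({f 0}, 0)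

lemma defect_lt (f : Fin (m + 1) → Fin n) : defect f < m + 1 := by
  have hfirst := Finset.card_le_card (singleton_subset_parkRun_fst f)
  have hcard := defect_add_card_parkRun f
  rw [Finset.card_singleton] at hfirst
  omega

lemma le_defect_iff (f : Fin (m + 1) → Fin (n + 1)) :
    m ≤ defect f ↔ ∀ i : Fin m, f 0 = Fin.last n ∧ f i.succ = Fin.last n := by
  have hfirst := singleton_subset_parkRun_fst f
  have hcard := defect_add_card_parkRun f
  calc m ≤ defect f ↔ (parkRun f).1.card ≤ ({f 0} : Finset (Fin (n + 1))).card := by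
        rw [Finset.card_singleton]; omega
    _ ↔ (parkRun f).1 = ({f 0}, 0).1 := ⟨Finset.eq_of_superset_of_card_ge hfirst,
        fun h => Finset.card_le_card h.le⟩
    _ ↔ _ := by
        rw [parkRun_succ, foldl_parkStep_fst_eq_iff, List.forall_mem_ofFn_iff]
        simp only [Finset.mem_singleton, Fin.forall_le_imp_eq_iff, Fin.tail]

lemma le_defect_iff_eq_const_last (f : Fin (n + 1) → Fin (n + 1)) :
    n ≤ defect f ↔ f = fun _ => Fin.last n := by
  rw [le_defect_iff, funext_iff, Fin.forall_fin_succ]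
  rcases n with _ | n
  · simp [Fin.fin_one_eq_zero (f 0)]
  · exact ⟨fun h => ⟨(h 0).1, fun i => (h i).2⟩, fun h i => ⟨h.1, h.2 i⟩⟩

end parkRun

/-- For `n ≥ 1`, exactly one assignment of `n` drivers to `n` spaces makes at
least `n - 1` drivers fail to park, and no assignment makes all `n` drivers fail. -/
theorem stmt14 (n : ℕ) (hn : 1 ≤ n) :
    (Finset.univ.filter (fun f : Fin n → Fin n => n - 1 ≤ defect f)).card = 1 ∧
      (Finset.univ.filter (fun f : Fin n → Fin n => defect f = n)).card = 0 := by
  obtain ⟨m, rfl⟩ : ∃ m, n = m + 1 := ⟨n - 1, by omega⟩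
  constructor
  · rw [Finset.card_eq_one]
    exact ⟨fun _ => Fin.last m, by
      ext f
      simp [le_defect_iff_eq_const_last]⟩
  · rw [Finset.card_eq_zero, Finset.filter_eq_empty_iff]
    exact fun f _ => (defect_lt f).ne
end

section
/- lim_{n→∞} cp(n,n,1)/cp(n,n,0) = 2e - 3, where cp(n,n,k) is the number of assignments of n drivers to n spaces with exactly k drivers failing to park; in particular cp(n,n,0) = (n+1)^(n-1). -/
open Finset

/-!
Appending an extra space `m` to the spaces `0, …, m - 1`, a failure-free assignment of `N + 1`
drivers to `m + 1` spaces either has no driver choosing `m`, and is then an assignment to `m`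
spaces with at most one failure (the failing driver takes `m`), or exactly one such driver.
Since the outcome of parking does not depend on the order of arrival, that driver may come last;
removing him leaves a failure-free assignment of `N` drivers to `m + 1` spaces with `m` free,
i.e. one to `m` spaces. Hence
`cp (m+1) (N+1) 0 = cp m (N+1) 0 + cp m (N+1) 1 + (N+1) cp m N 0`.
Pollak's circular argument counts the failure-free assignments: parking on a circle of `m + 1`
spaces, all `N` drivers park, `m + 1 - N` spaces stay free, each one equally often by rotation,
and the top space stays free exactly for the failure-free assignments to the other `m` spaces.
So `(m + 1) cp m N 0 = (m + 1 - N) (m + 1) ^ N`, and for `n = K + 1` the ratio is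
`2 (1 + 1/(K+2)) ^ K - 2 (K+1)/(K+2) - 1 → 2e - 3`.
-/

namespace Parking

variable {m : ℕ}

section Linear

lemma nonempty_free_iff {S : Finset (Fin m)} {c : Fin m} :
    ((univ \ S).filter (fun x => c ≤ x)).Nonempty ↔ ¬ ∀ y, c ≤ y → y ∈ S := by
  simp [Finset.Nonempty, and_comm]

lemma mem_parkStep_fst {p : Finset (Fin m) × ℕ} {c x : Fin m} :
    x ∈ (parkStep p c).1 ↔ x ∈ p.1 ∨ c ≤ x ∧ ∀ y, c ≤ y → y < x → y ∈ p.1 := by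
  unfold parkStep
  split_ifs with h
  · set F := (univ \ p.1).filter (fun x => c ≤ x)
    have hq : (F.min' h) ∉ p.1 ∧ c ≤ F.min' h := by simpa [F] using F.min'_mem h
    have hle : ∀ y, y ∉ p.1 → c ≤ y → F.min' h ≤ y := fun y hy hcy ↦
      F.min'_le y (by simp [F, hy, hcy])
    rw [mem_insert]
    constructor
    · rintro (rfl | hx)
      · exact Or.inr ⟨hq.2, fun y hcy hyx ↦ by_contra fun hy ↦ (hle y hy hcy).not_gt hyx⟩
      · exact Or.inl hx
    · rintro (hx | ⟨hcx, hbelow⟩)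
      · exact Or.inr hx
      · by_cases hx : x ∈ p.1
        · exact Or.inr hx
        · refine Or.inl (le_antisymm ?_ (hle x hx hcx))
          by_contra! hlt
          exact hq.1 (hbelow _ hq.2 hlt)
  · have hfull := not_not.1 (nonempty_free_iff.not.1 h)
    exact ⟨Or.inl, fun hx ↦ hx.elim id fun ⟨hcx, _⟩ ↦ hfull x hcx⟩

lemma parkStep_snd (p : Finset (Fin m) × ℕ) (c : Fin m) :
    (parkStep p c).2 = p.2 + if ∀ y, c ≤ y → y ∈ p.1 then 1 else 0 := by
  unfold parkStep
  by_cases h : ∀ y, c ≤ y → y ∈ p.1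
  · rw [dif_neg (nonempty_free_iff.not.2 (not_not.2 h)), if_pos h]
  · rw [dif_pos (nonempty_free_iff.2 h), if_neg h, add_zero]

lemma card_parkStep_fst_add_snd (p : Finset (Fin m) × ℕ) (c : Fin m) :
    #(parkStep p c).1 + (parkStep p c).2 = #p.1 + p.2 + 1 := by
  unfold parkStep
  split_ifs with h
  · have hq := (((univ \ p.1).filter (fun x => c ≤ x)).min'_mem h)
    simp only [mem_filter, mem_sdiff, mem_univ, true_and] at hq
    rw [card_insert_of_notMem hq.1]
    ring
  · ring

lemma self_mem_parkStep_fst (p : Finset (Fin m) × ℕ) (c : Fin m) : c ∈ (parkStep p c).1 :=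
  mem_parkStep_fst.2 <| (em (c ∈ p.1)).imp id fun _ ↦ ⟨le_rfl, fun _ h h' ↦ absurd h' h.not_gt⟩

/- When `[b, x)` contains a space `y₀` that was free, one of the two drivers takes `y₀` and the
other one takes `x`, in either order of arrival. -/
lemma parkStep_fst_right_comm_of_le (p : Finset (Fin m) × ℕ) {a b : Fin m} (hab : a ≤ b) :
    (parkStep (parkStep p a) b).1 = (parkStep (parkStep p b) a).1 := by
  ext x
  simp only [mem_parkStep_fst]
  set S := p.1
  constructor
  · rintro ((hx | ⟨hax, ha⟩) | ⟨hbx, hb⟩)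
    · exact Or.inl (Or.inl hx)
    · exact Or.inr ⟨hax, fun y hay hyx ↦ Or.inl (ha y hay hyx)⟩
    by_cases hall : ∀ y, b ≤ y → y < x → y ∈ S
    · exact Or.inl (Or.inr ⟨hbx, hall⟩)
    push Not at hall
    obtain ⟨y₀, hby₀, hy₀x, hy₀S⟩ := hall
    obtain ⟨hay₀, ha₀⟩ := (hb y₀ hby₀ hy₀x).resolve_left hy₀S
    refine Or.inr ⟨hab.trans hbx, fun y hay hyx ↦ ?_⟩
    rcases lt_trichotomy y y₀ with hlt | rfl | hgt
    · exact Or.inl (ha₀ y hay hlt)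
    · exact Or.inr ⟨hby₀, fun z hbz hzy ↦ ha₀ z (hab.trans hbz) hzy⟩
    · exact (hb y (hby₀.trans hgt.le) hyx).imp_right fun ha ↦ absurd (ha.2 y₀ hay₀ hgt) hy₀S
  · rintro ((hx | ⟨hbx, hb⟩) | ⟨hax, ha⟩)
    · exact Or.inl (Or.inl hx)
    · exact Or.inr ⟨hbx, fun y hby hyx ↦ Or.inl (hb y hby hyx)⟩
    by_cases hall : ∀ y, a ≤ y → y < x → y ∈ S
    · exact Or.inl (Or.inr ⟨hax, hall⟩)
    push Not at hall
    obtain ⟨y₀, hay₀, hy₀x, hy₀S⟩ := hall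
    obtain ⟨hby₀, hb₀⟩ := (ha y₀ hay₀ hy₀x).resolve_left hy₀S
    refine Or.inr ⟨hby₀.trans hy₀x.le, fun y hby hyx ↦ ?_⟩
    rcases lt_trichotomy y y₀ with hlt | rfl | hgt
    · exact Or.inl (hb₀ y hby hlt)
    · refine Or.inr ⟨hay₀, fun z haz hzy ↦ ?_⟩
      by_cases hbz : b ≤ z
      · exact hb₀ z hbz hzy
      · exact (ha z haz (hzy.trans hyx)).resolve_right fun hb ↦ hbz hb.1
    · exact (ha y (hay₀.trans hgt.le) hyx).imp_right fun hb ↦ absurd (hb.2 y₀ hby₀ hgt) hy₀S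

lemma parkStep_right_comm (p : Finset (Fin m) × ℕ) (a b : Fin m) :
    parkStep (parkStep p a) b = parkStep (parkStep p b) a := by
  have hfst : (parkStep (parkStep p a) b).1 = (parkStep (parkStep p b) a).1 := by
    rcases le_total a b with hab | hba
    exacts [parkStep_fst_right_comm_of_le p hab, (parkStep_fst_right_comm_of_le p hba).symm]
  have hpab := card_parkStep_fst_add_snd (parkStep p a) b
  have hpba := card_parkStep_fst_add_snd (parkStep p b) a
  have hpa := card_parkStep_fst_add_snd p a
  have hpb := card_parkStep_fst_add_snd p b
  rw [hfst] at hpab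
  exact Prod.ext hfst (by omega)

instance : RightCommutative (parkStep (n := m)) := ⟨parkStep_right_comm⟩

lemma parkRun_comp_perm {N : ℕ} (f : Fin N → Fin m) (σ : Equiv.Perm (Fin N)) :
    parkRun (f ∘ σ) = parkRun f :=
  (σ.ofFn_comp_perm f).foldl_eq _

lemma parkRun_insertNth {K : ℕ} (j : Fin (K + 1)) (c : Fin m) (h : Fin K → Fin m) :
    parkRun (j.insertNth c h) = parkStep (parkRun h) c := by
  rw [← parkRun_comp_perm _ j.cycleRange.symm, Fin.insertNth_comp_cycleRange_symm, parkRun,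
    List.ofFn_succ, ((List.perm_append_singleton _ _).symm).foldl_eq]
  simp [parkRun]

lemma apply_mem_parkRun_fst {N : ℕ} (f : Fin N → Fin m) (j : Fin N) : f j ∈ (parkRun f).1 := by
  obtain ⟨K, rfl⟩ : ∃ K, N = K + 1 := Nat.exists_eq_succ_of_ne_zero j.pos.ne'
  rw [← j.insertNth_self_removeNth f, parkRun_insertNth, Fin.insertNth_apply_same]
  exact self_mem_parkStep_fst _ _

lemma defect_insertNth_last {K : ℕ} (j : Fin (K + 1)) (h : Fin K → Fin (m + 1)) :
    defect (j.insertNth (Fin.last m) h) =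
      defect h + if Fin.last m ∈ (parkRun h).1 then 1 else 0 := by
  simp [defect, parkRun_insertNth, parkStep_snd, Fin.last_le_iff]

end Linear

section Lift

/-- The state on the spaces `0, …, m` corresponding to a state on `0, …, m - 1`: the extra space
`Fin.last m` is taken by the first driver who failed. -/
def liftState (p : Finset (Fin m) × ℕ) : Finset (Fin (m + 1)) × ℕ :=
  (p.1.map Fin.castSuccEmb ∪ ({Fin.last m} : Finset _).filter (fun _ ↦ 0 < p.2), p.2 - 1)

@[simp]
lemma liftState_snd (p : Finset (Fin m) × ℕ) : (liftState p).2 = p.2 - 1 := rfl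

@[simp]
lemma castSucc_mem_liftState_fst {p : Finset (Fin m) × ℕ} {c : Fin m} :
    c.castSucc ∈ (liftState p).1 ↔ c ∈ p.1 := by
  simp only [liftState, mem_union, mem_map, mem_filter, mem_singleton]
  simp [(Fin.castSucc_lt_last c).ne]

@[simp]
lemma last_mem_liftState_fst {p : Finset (Fin m) × ℕ} :
    Fin.last m ∈ (liftState p).1 ↔ 0 < p.2 := by
  simp only [liftState, mem_union, mem_map, mem_filter, mem_singleton]
  simp [fun c : Fin m ↦ (Fin.castSucc_lt_last c).ne]

lemma parkStep_liftState (p : Finset (Fin m) × ℕ) (c : Fin m) :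
    parkStep (liftState p) c.castSucc = liftState (parkStep p c) := by
  refine Prod.ext ?_ ?_
  · ext x
    induction x using Fin.lastCases with
    | last =>
      simp only [mem_parkStep_fst, last_mem_liftState_fst, parkStep_snd]
      split_ifs <;> simp_all [Fin.forall_fin_succ', Fin.le_last]
    | cast y =>
      simp [mem_parkStep_fst, Fin.forall_fin_succ', Fin.le_last, (Fin.castSucc_lt_last y).le]
  · simp only [parkStep_snd, liftState_snd, Fin.forall_fin_succ', last_mem_liftState_fst,
      castSucc_mem_liftState_fst, Fin.castSucc_le_castSucc_iff, Fin.le_last, true_implies]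
    split_ifs <;> simp_all
    omega

lemma parkRun_comp_castSucc {N : ℕ} (f : Fin N → Fin m) :
    parkRun (Fin.castSucc ∘ f) = liftState (parkRun f) := by
  have hfold : ∀ (l : List (Fin m)) p,
      (l.map Fin.castSucc).foldl parkStep (liftState p) = liftState (l.foldl parkStep p) := by
    intro l
    induction l with
    | nil => simp
    | cons c l ih => simp [parkStep_liftState, ih]
  have hempty : liftState ((∅, 0) : Finset (Fin m) × ℕ) = (∅, 0) := by simp [liftState]
  rw [parkRun, parkRun, ← List.map_ofFn, ← hfold, hempty]

lemma defect_comp_castSucc {N : ℕ} (f : Fin N → Fin m) :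
    defect (Fin.castSucc ∘ f) = defect f - 1 := by
  simp [defect, parkRun_comp_castSucc]

lemma last_mem_parkRun_comp_castSucc {N : ℕ} (f : Fin N → Fin m) :
    Fin.last m ∈ (parkRun (Fin.castSucc ∘ f)).1 ↔ 0 < defect f := by
  simp [defect, parkRun_comp_castSucc]

end Lift

section Counting

lemma card_filter_forall_ne_last_and {N : ℕ} (P : (Fin N → Fin (m + 1)) → Prop) [DecidablePred P] :
    #{g : Fin N → Fin (m + 1) | (∀ j, g j ≠ Fin.last m) ∧ P g} =
      #{f : Fin N → Fin m | P (Fin.castSucc ∘ f)} := by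
  refine (card_bij (fun f _ ↦ Fin.castSucc ∘ f) ?_ ?_ ?_).symm
  · intro f hf
    simpa [(Fin.castSucc_lt_last _).ne] using hf
  · intro f _ f' _ h
    exact (Fin.castSucc_injective m).comp_left h
  · intro g hg
    simp only [mem_filter, mem_univ, true_and] at hg
    refine ⟨fun j ↦ (g j).castPred (hg.1 j), ?_, funext fun j ↦ Fin.castSucc_castPred _ _⟩
    simpa [Function.comp_def] using hg.2

lemma card_filter_apply_eq_and {α : Type*} [Fintype α] [DecidableEq α] {K : ℕ}
    (j : Fin (K + 1)) (a : α) (P : (Fin (K + 1) → α) → Prop) [DecidablePred P] :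
    #{f : Fin (K + 1) → α | f j = a ∧ P f} = #{h : Fin K → α | P (j.insertNth a h)} := by
  refine (card_bij (fun h _ ↦ j.insertNth a h) ?_ ?_ ?_).symm
  · intro h hh
    simpa using hh
  · intro h _ h' _ hh'
    exact funext fun i ↦ by simpa using congr_fun hh' (j.succAbove i)
  · intro f hf
    simp only [mem_filter, mem_univ, true_and] at hf
    refine ⟨j.removeNth f, by simpa [← hf.1] using hf.2, ?_⟩
    rw [← hf.1, Fin.insertNth_self_removeNth]

lemma cp_zero_add_cp_one (n N : ℕ) :
    cp n N 0 + cp n N 1 = #{f : Fin N → Fin n | defect f ≤ 1} := by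
  rw [cp, cp, ← card_union_of_disjoint (disjoint_filter.2 fun _ _ h ↦ by omega), ← filter_or]
  congr 1
  ext f
  simp only [mem_filter, mem_univ, true_and]
  omega

lemma card_defect_eq_zero_and_last_notMem (N : ℕ) :
    #{g : Fin N → Fin (m + 1) | defect g = 0 ∧ Fin.last m ∉ (parkRun g).1} = cp m N 0 := by
  have havoid : ∀ g : Fin N → Fin (m + 1), Fin.last m ∉ (parkRun g).1 → ∀ j, g j ≠ Fin.last m :=
    fun g hg j hj ↦ hg (hj ▸ apply_mem_parkRun_fst g j)
  rw [cp, ← filter_congr (p := fun g ↦ (∀ j, g j ≠ Fin.last m) ∧ _)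
    (fun g _ ↦ ⟨And.right, fun h ↦ ⟨havoid g h.2, h⟩⟩), card_filter_forall_ne_last_and]
  congr 1
  ext f
  simp only [mem_filter, mem_univ, true_and, defect_comp_castSucc,
    last_mem_parkRun_comp_castSucc]
  omega

lemma defect_pos_of_apply_eq_last {K : ℕ} {f : Fin (K + 1) → Fin (m + 1)} {j j' : Fin (K + 1)}
    (hj : f j = Fin.last m) (hj' : f j' = Fin.last m) (hne : j' ≠ j) : 0 < defect f := by
  obtain ⟨i, rfl⟩ := Fin.exists_succAbove_eq hne
  have hlast : Fin.last m ∈ (parkRun (j.removeNth f)).1 := hj' ▸ apply_mem_parkRun_fst _ i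
  rw [← j.insertNth_self_removeNth f, hj, defect_insertNth_last, if_pos hlast]
  omega

lemma card_defect_eq_zero_and_apply_eq_last (N : ℕ) (j : Fin (N + 1)) :
    #{f : Fin (N + 1) → Fin (m + 1) | f j = Fin.last m ∧ defect f = 0} = cp m N 0 := by
  rw [card_filter_apply_eq_and, ← card_defect_eq_zero_and_last_notMem]
  congr 1
  ext h
  simp [defect_insertNth_last]

theorem cp_succ_succ_zero (m N : ℕ) :
    cp (m + 1) (N + 1) 0 = cp m (N + 1) 0 + cp m (N + 1) 1 + (N + 1) * cp m N 0 := by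
  have hsplit := card_filter_add_card_filter_not
    (s := univ.filter fun f : Fin (N + 1) → Fin (m + 1) ↦ defect f = 0)
    (fun f ↦ ∀ j, f j ≠ Fin.last m)
  have hnone : #{f : Fin (N + 1) → Fin (m + 1) | defect f = 0 ∧ ∀ j, f j ≠ Fin.last m} =
      cp m (N + 1) 0 + cp m (N + 1) 1 := by
    rw [cp_zero_add_cp_one, ← filter_congr (fun f _ ↦ and_comm), card_filter_forall_ne_last_and]
    simp only [defect_comp_castSucc, Nat.sub_eq_zero_iff_le]
  have hsome : #{f : Fin (N + 1) → Fin (m + 1) | defect f = 0 ∧ ¬∀ j, f j ≠ Fin.last m} =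
      (N + 1) * cp m N 0 := by
    have hunion : ({f : Fin (N + 1) → Fin (m + 1) | defect f = 0 ∧ ¬∀ j, f j ≠ Fin.last m} :
        Finset _) = univ.biUnion fun j ↦ {f | f j = Fin.last m ∧ defect f = 0} := by
      ext f
      simp only [mem_filter, mem_univ, true_and, mem_biUnion, not_forall, not_not]
      exact ⟨fun ⟨hf, j, hj⟩ ↦ ⟨j, hj, hf⟩, fun ⟨j, hj, hf⟩ ↦ ⟨hf, j, hj⟩⟩
    have hdisj : ((univ : Finset (Fin (N + 1))) : Set (Fin (N + 1))).PairwiseDisjoint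
        fun j ↦ ({f | f j = Fin.last m ∧ defect f = 0} : Finset (Fin (N + 1) → Fin (m + 1))) := by
      intro j _ j' _ hne
      refine disjoint_filter.2 fun f _ hj hj' ↦ ?_
      have := defect_pos_of_apply_eq_last hj.1 hj'.1 hne.symm
      omega
    rw [hunion, card_biUnion hdisj]
    simp [card_defect_eq_zero_and_apply_eq_last]
  rw [cp, ← hsplit, filter_filter, filter_filter, hnone, hsome]

end Counting

section Circular

variable {n : ℕ}

/-- Circular parking: the driver with choice `c` takes the first free space in the cyclic order
`c, c + 1, …`, in which `x - c` is the position of `x`. -/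
def circStep (S : Finset (Fin n)) (c : Fin n) : Finset (Fin n) :=
  S ∪ univ.filter fun x ↦ ∀ y, y - c < x - c → y ∈ S

def circRun {N : ℕ} (g : Fin N → Fin n) : Finset (Fin n) :=
  (List.ofFn g).foldl circStep ∅

lemma mem_circStep {S : Finset (Fin n)} {c x : Fin n} :
    x ∈ circStep S c ↔ x ∈ S ∨ ∀ y, y - c < x - c → y ∈ S := by
  simp [circStep]

lemma subset_circStep (S : Finset (Fin n)) (c : Fin n) : S ⊆ circStep S c :=
  fun _ hx ↦ mem_circStep.2 (Or.inl hx)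

lemma circStep_eq_insert [NeZero n] {S : Finset (Fin n)} {c x : Fin n} (hx : x ∉ S)
    (hmin : ∀ y ∉ S, x - c ≤ y - c) : circStep S c = insert x S := by
  ext y
  rw [mem_circStep, mem_insert]
  constructor
  · rintro (hy | hbelow)
    · exact Or.inr hy
    by_cases hyS : y ∈ S
    · exact Or.inr hyS
    refine Or.inl (by_contra fun hne ↦ hx (hbelow x ((hmin y hyS).lt_of_ne ?_)))
    exact fun h ↦ hne (sub_left_injective h).symm
  · rintro (rfl | hy)
    · exact Or.inr fun z hz ↦ by_contra fun hzS ↦ (hmin z hzS).not_gt hz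
    · exact Or.inl hy

lemma card_circStep [NeZero n] {S : Finset (Fin n)} (hS : S ≠ univ) (c : Fin n) :
    #(circStep S c) = #S + 1 := by
  obtain ⟨x, hx, hmin⟩ := exists_min_image (univ \ S) (· - c) (sdiff_nonempty.2 fun h ↦
    hS (eq_univ_of_forall fun y ↦ h (mem_univ y)))
  simp only [mem_sdiff, mem_univ, true_and] at hx hmin
  rw [circStep_eq_insert hx hmin, card_insert_of_notMem hx]

lemma card_circRun [NeZero n] {N : ℕ} (g : Fin N → Fin n) (hN : N ≤ n) : #(circRun g) = N := by
  have hfold : ∀ (l : List (Fin n)) (S : Finset (Fin n)), #S + l.length ≤ n →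
      #(l.foldl circStep S) = #S + l.length := by
    intro l
    induction l with
    | nil => simp
    | cons c l ih =>
      intro S hS
      have hSu : S ≠ univ := fun h ↦ by simp [h] at hS
      simp only [List.foldl_cons, List.length_cons] at hS ⊢
      rw [ih _ (by rw [card_circStep hSu]; omega), card_circStep hSu]
      ring
  simpa [circRun] using hfold (List.ofFn g) ∅ (by simpa using hN)

lemma circStep_map_addRight [NeZero n] (S : Finset (Fin n)) (c t : Fin n) :
    circStep (S.map (Equiv.addRight t).toEmbedding) (c + t) =
      (circStep S c).map (Equiv.addRight t).toEmbedding := by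
  ext x
  have hshift : ∀ y, y - (c + t) = y + -t - c := fun y ↦ by abel
  simp only [mem_circStep, mem_map_equiv, Equiv.coe_addRight, Equiv.addRight_symm, hshift]
  exact or_congr_right ⟨fun h y hy ↦ by simpa using h (y + t) (by simpa using hy),
    fun h y hy ↦ h _ hy⟩

lemma circRun_add [NeZero n] {N : ℕ} (g : Fin N → Fin n) (t : Fin n) :
    circRun (fun j ↦ g j + t) = (circRun g).map (Equiv.addRight t).toEmbedding := by
  have hfold : ∀ (l : List (Fin n)) (S : Finset (Fin n)),
      (l.map (· + t)).foldl circStep (S.map (Equiv.addRight t).toEmbedding) =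
        (l.foldl circStep S).map (Equiv.addRight t).toEmbedding := by
    intro l
    induction l with
    | nil => simp
    | cons c l ih =>
      intro S
      rw [List.map_cons, List.foldl_cons, List.foldl_cons, circStep_map_addRight, ih]
  simpa [circRun, List.map_ofFn, Function.comp_def] using hfold (List.ofFn g) ∅

lemma card_filter_notMem_circRun [NeZero n] {N : ℕ} (hN : N ≤ n) (c : Fin n) :
    n * #{g : Fin N → Fin n | c ∉ circRun g} = (n - N) * n ^ N := by
  have hrot : ∀ c',
      #{g : Fin N → Fin n | c' ∉ circRun g} = #{g : Fin N → Fin n | c ∉ circRun g} := by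
    intro c'
    refine card_nbij' (fun g j ↦ g j + (c - c')) (fun g j ↦ g j + (c' - c)) ?_ ?_ ?_ ?_
    · intro g hg
      simpa [circRun_add, mem_map_equiv] using hg
    · intro g hg
      simpa [circRun_add, mem_map_equiv] using hg
    · exact fun g _ ↦ funext fun j ↦ by simp [add_assoc]
    · exact fun g _ ↦ funext fun j ↦ by simp [add_assoc]
  calc n * #{g : Fin N → Fin n | c ∉ circRun g}
      = ∑ c' : Fin n, #{g : Fin N → Fin n | c' ∉ circRun g} := by simp [hrot]
    _ = ∑ g : Fin N → Fin n, #{c' : Fin n | c' ∉ circRun g} :=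
      sum_card_bipartiteAbove_eq_sum_card_bipartiteBelow (fun c' g ↦ c' ∉ circRun g)
    _ = (n - N) * n ^ N := by
      simp [filter_not, card_univ_sdiff, card_circRun _ hN, mul_comm]

end Circular

section CircularVsLinear

lemma circStep_eq_parkStep_fst {p : Finset (Fin (m + 1)) × ℕ} {c : Fin (m + 1)}
    (hfree : ∃ z, c ≤ z ∧ z ∉ p.1) : circStep p.1 c = (parkStep p c).1 := by
  obtain ⟨z, hcz, hz⟩ := hfree
  have hle : ∀ y : Fin (m + 1), c ≤ y → ((y - c : Fin (m + 1)) : ℕ) = y - c :=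
    fun _ ↦ Fin.coe_sub_iff_le.2
  have hlt : ∀ y : Fin (m + 1), y < c → ((y - c : Fin (m + 1)) : ℕ) = m + 1 + y - c :=
    fun _ ↦ Fin.coe_sub_iff_lt.2
  ext x
  rw [mem_circStep, mem_parkStep_fst]
  refine or_congr_right ⟨fun h ↦ ?_, fun ⟨hcx, h⟩ y hy ↦ ?_⟩
  · have hcx : c ≤ x := by
      by_contra! hxc
      refine hz (h z ?_)
      rw [Fin.lt_def, hle z hcz, hlt x hxc]
      omega
    refine ⟨hcx, fun y hcy hyx ↦ h y ?_⟩
    rw [Fin.lt_def, hle y hcy, hle x hcx]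
    exact Nat.sub_lt_sub_right hcy hyx
  · rw [Fin.lt_def, hle x hcx] at hy
    rcases lt_or_ge y c with hyc | hcy
    · rw [hlt y hyc] at hy
      omega
    · rw [hle y hcy] at hy
      exact h y hcy (by rw [Fin.lt_def]; omega)

lemma circStep_parkStep_invariant {T : Finset (Fin (m + 1))} {p : Finset (Fin (m + 1)) × ℕ}
    (c : Fin (m + 1)) (h : T = p.1 ∧ p.2 = 0 ∨ Fin.last m ∈ T ∧ 0 < p.2) :
    circStep T c = (parkStep p c).1 ∧ (parkStep p c).2 = 0 ∨
      Fin.last m ∈ circStep T c ∧ 0 < (parkStep p c).2 := by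
  rw [parkStep_snd]
  rcases h with ⟨rfl, hd⟩ | ⟨hT, hd⟩
  · by_cases hfull : ∀ y, c ≤ y → y ∈ p.1
    · exact Or.inr ⟨subset_circStep _ _ (hfull _ (Fin.le_last c)), by rw [if_pos hfull]; omega⟩
    · push Not at hfull
      exact Or.inl ⟨circStep_eq_parkStep_fst hfull, by simp [hd, hfull]⟩
  · exact Or.inr ⟨subset_circStep _ _ hT, by omega⟩

lemma last_notMem_circRun_iff {N : ℕ} (g : Fin N → Fin (m + 1)) :
    Fin.last m ∉ circRun g ↔ defect g = 0 ∧ Fin.last m ∉ (parkRun g).1 := by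
  have hfold : ∀ (l : List (Fin (m + 1))) T (p : Finset (Fin (m + 1)) × ℕ),
      T = p.1 ∧ p.2 = 0 ∨ Fin.last m ∈ T ∧ 0 < p.2 →
      l.foldl circStep T = (l.foldl parkStep p).1 ∧ (l.foldl parkStep p).2 = 0 ∨
        Fin.last m ∈ l.foldl circStep T ∧ 0 < (l.foldl parkStep p).2 := by
    intro l
    induction l with
    | nil => exact fun _ _ ↦ id
    | cons c l ih => exact fun T p h ↦ ih _ _ (circStep_parkStep_invariant c h)
  rcases hfold (List.ofFn g) ∅ (∅, 0) (Or.inl ⟨rfl, rfl⟩) with ⟨heq, hd⟩ | ⟨hlast, hd⟩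
  · simp [circRun, defect, parkRun, heq, hd]
  · simp [circRun, defect, parkRun, hlast, hd.ne']

theorem succ_mul_cp_zero {N : ℕ} (hN : N ≤ m + 1) :
    (m + 1) * cp m N 0 = (m + 1 - N) * (m + 1) ^ N := by
  rw [← card_defect_eq_zero_and_last_notMem, ← card_filter_notMem_circRun hN (Fin.last m)]
  simp only [last_notMem_circRun_iff]

theorem cp_succ_zero {N : ℕ} (hN : N ≤ m) : cp m (N + 1) 0 = (m - N) * (m + 1) ^ N := by
  have h := succ_mul_cp_zero (m := m) (N := N + 1) (by omega)
  rw [show m + 1 - (N + 1) = m - N by omega, pow_succ', mul_left_comm] at h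
  exact Nat.eq_of_mul_eq_mul_left m.succ_pos h

end CircularVsLinear

theorem cp_one_div_cp_zero (K : ℕ) :
    (cp (K + 1) (K + 1) 1 : ℝ) / cp (K + 1) (K + 1) 0 =
      2 * (1 + 1 / ((K : ℝ) + 2)) ^ K - 2 * (((K : ℝ) + 1) / ((K : ℝ) + 2)) - 1 := by
  have hsquare : cp (K + 1) (K + 1) 0 = (K + 2) ^ K := by
    simpa using cp_succ_zero (m := K + 1) (N := K) (by omega)
  have hspare : cp (K + 2) (K + 1) 0 = 2 * (K + 3) ^ K := by
    simpa using cp_succ_zero (m := K + 2) (N := K) (by omega)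
  have hfewer := succ_mul_cp_zero (m := K + 1) (N := K) (by omega)
  rw [show K + 1 + 1 - K = 2 by omega] at hfewer
  have hsplit := cp_succ_succ_zero (K + 1) K
  rw [hspare, hsquare] at hsplit
  have hsplit' : (2 * (K + 3) ^ K : ℝ) =
      (K + 2) ^ K + cp (K + 1) (K + 1) 1 + (K + 1) * cp (K + 1) K 0 := by exact_mod_cast hsplit
  have hfewer' : ((K + 2) * cp (K + 1) K 0 : ℝ) = 2 * (K + 2) ^ K := by exact_mod_cast hfewer
  have hpos : (0 : ℝ) < K + 2 := by positivity
  rw [hsquare, Nat.cast_pow, one_add_div hpos.ne', div_pow]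
  push_cast
  field_simp
  linear_combination (-((K : ℝ) + 2)) * hsplit' - ((K : ℝ) + 1) * hfewer'

end Parking

open Filter Topology

/-- `lim_{n→∞} cp(n,n,1)/cp(n,n,0) = 2e - 3`. -/
theorem stmt18 :
    Tendsto (fun n : ℕ => (cp n n 1 : ℝ) / (cp n n 0 : ℝ)) atTop
      (𝓝 (2 * Real.exp 1 - 3)) := by
  rw [← tendsto_add_atTop_iff_nat 1]
  have hexp : Tendsto (fun K : ℕ ↦ (1 + 1 / ((K : ℝ) + 2)) ^ K) atTop (𝓝 (Real.exp 1)) :=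
    Real.tendsto_one_add_pow_exp_of_tendsto
      (by simpa only [mul_one_div] using tendsto_natCast_div_add_atTop (2 : ℝ))
  have hfrac : Tendsto (fun K : ℕ ↦ ((K : ℝ) + 1) / ((K : ℝ) + 2)) atTop (𝓝 1) := by
    refine ((tendsto_add_atTop_iff_nat 1).2 (tendsto_natCast_div_add_atTop (1 : ℝ))).congr
      fun K ↦ ?_
    push_cast
    ring
  rw [show 2 * Real.exp 1 - 3 = 2 * Real.exp 1 - 2 * 1 - 1 by ring]
  exact (((hexp.const_mul 2).sub (hfrac.const_mul 2)).sub_const 1).congr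
    fun K ↦ (Parking.cp_one_div_cp_zero K).symm
end

section
/- For λ ∈ ℝ with λ > 0, the series Σ_{i=0}^{∞} (λ^i/i!)·(i+1)^(i-1)·e^(-λ(1+i)) converges and equals T(λ·e^(-λ))/λ, where T is the tree function (the inverse of t ↦ t·e^(-t) on [0,1]); in particular, for λ ≤ 1 this value equals 1. -/
/-!
After the shift `n = i + 1` the series is `T (λ e^(-λ)) / λ` with `T v = ∑ n^(n-1)/n! vⁿ`, and
for `λ > 1` the intermediate value theorem gives `t ∈ (0, 1)` with `t e^(-t) = λ e^(-λ)`; so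
everything reduces to `T (t e^(-t)) = t` for `0 < t ≤ 1`.

For small `t`, expanding each `e^(-nt)` gives an absolutely convergent double series whose
coefficient of `t^N` is, for `N ≥ 2`, `(1/N!) ∑ₖ (-1)^(N-k) (N choose k) k^(N-1)`: an `N`-th
forward difference of a polynomial of degree `N - 1`, hence `0`. Since `n^n/n! ≤ eⁿ`, the radius
of `T` is at least `1/e`, and `t e^(-t) < 1/e` for `t ≠ 1`, so both sides are analytic on `(0, 1)`
and the identity theorem spreads the equality over `(0, 1)`. At `t = 1`, partial sums of the
nonnegative series at `1/e` are limits of partial sums at `t e^(-t)`, which gives `T (1/e) = 1`.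
-/

open Real Filter Finset Topology
open scoped Nat

theorem sum_range_neg_one_pow_mul_choose_mul_pow_eq_zero {R : Type*} [CommRing R] {j N : ℕ}
    (h : j < N) :
    ∑ k ∈ range (N + 1), (-1 : R) ^ (N - k) * N.choose k * (k : R) ^ j = 0 := by
  have := congrFun (fwdDiff_iter_pow_eq_zero_of_lt (R := R) h) 0
  simpa [fwdDiff_iter_eq_sum_shift, zsmul_eq_mul] using this

theorem HasSum.sum_antidiagonal {α : Type*} [AddCommMonoid α] [TopologicalSpace α]
    [ContinuousAdd α] [RegularSpace α] {f : ℕ × ℕ → α} {a : α} (h : HasSum f a) :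
    HasSum (fun N => ∑ p ∈ antidiagonal N, f p) a :=
  ((Finset.HasAntidiagonal.sigmaAntidiagonalEquivProd).hasSum_iff.mpr h).sigma fun N =>
    (antidiagonal N).hasSum f

-- `n ^ (n - 1) / n !`, written so that division by zero makes the constant coefficient `0`.
noncomputable def treeCoeff (n : ℕ) : ℝ := (n : ℝ) ^ n / (n * n !)

noncomputable def treeFun (x : ℝ) : ℝ := ∑' n, treeCoeff n * x ^ n

@[simp] lemma treeCoeff_zero : treeCoeff 0 = 0 := by simp [treeCoeff]

lemma treeCoeff_succ (n : ℕ) : treeCoeff (n + 1) = ((n : ℝ) + 1) ^ n / (n + 1)! := by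
  rw [treeCoeff, pow_succ, Nat.factorial_succ]
  push_cast
  field_simp

lemma treeCoeff_nonneg (n : ℕ) : 0 ≤ treeCoeff n := by unfold treeCoeff; positivity

lemma treeCoeff_le_exp_one_pow (n : ℕ) : treeCoeff n ≤ exp 1 ^ n := by
  rcases n.eq_zero_or_pos with rfl | hn
  · simp
  calc treeCoeff n ≤ (n : ℝ) ^ n / n ! := by
        unfold treeCoeff
        gcongr
        exact le_mul_of_one_le_left (by positivity) (by exact_mod_cast hn)
    _ ≤ exp n := pow_div_factorial_le_exp _ n.cast_nonneg n
    _ = exp 1 ^ n := by rw [← exp_nat_mul, mul_one]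

lemma treeCoeff_mul_neg_pow_div_factorial {k N : ℕ} (hk : 0 < k) (hkN : k ≤ N) :
    treeCoeff k * (-(k : ℝ)) ^ (N - k) / (N - k)! =
      (-1) ^ (N - k) * N.choose k * (k : ℝ) ^ (N - 1) / N ! := by
  obtain ⟨b, rfl⟩ := Nat.exists_eq_add_of_lt hk
  obtain ⟨a, rfl⟩ := Nat.exists_eq_add_of_le hkN
  rw [Nat.cast_choose ℝ hkN, treeCoeff_succ, show 0 + b + 1 + a - (0 + b + 1) = a by omega,
    show 0 + b + 1 + a - 1 = b + a by omega, neg_pow, pow_add]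
  push_cast
  field_simp
  ring

lemma sum_antidiagonal_treeCoeff_mul_neg_pow (N : ℕ) :
    ∑ p ∈ antidiagonal N, treeCoeff p.1 * (-(p.1 : ℝ)) ^ p.2 / p.2 ! =
      if N = 1 then 1 else 0 := by
  rw [Nat.sum_antidiagonal_eq_sum_range_succ_mk]
  match N with
  | 0 => simp
  | 1 => simp [sum_range_succ, treeCoeff]
  | N + 2 =>
    calc ∑ k ∈ range (N + 2 + 1), treeCoeff k * (-(k : ℝ)) ^ (N + 2 - k) / (N + 2 - k)!
        = ∑ k ∈ range (N + 2 + 1),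
            (-1) ^ (N + 2 - k) * (N + 2).choose k * (k : ℝ) ^ (N + 2 - 1) / (N + 2)! := by
          refine sum_congr rfl fun k hk => ?_
          rcases k.eq_zero_or_pos with rfl | hk0
          · simp
          · exact treeCoeff_mul_neg_pow_div_factorial hk0 (by simpa [Nat.lt_succ_iff] using hk)
      _ = 0 := by
          rw [← sum_div, sum_range_neg_one_pow_mul_choose_mul_pow_eq_zero (by omega),
            zero_div]

lemma summable_treeCoeff_mul_pow {x : ℝ} (hx0 : 0 ≤ x) (hx : x < exp (-1)) :
    Summable fun n => treeCoeff n * x ^ n := by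
  have hex : exp 1 * x < 1 := by
    rw [mul_comm, ← lt_div_iff₀ (exp_pos 1), one_div, ← exp_neg]
    exact hx
  refine (summable_geometric_of_lt_one (by positivity) hex).of_nonneg_of_le
    (fun n => mul_nonneg (treeCoeff_nonneg n) (pow_nonneg hx0 n)) fun n => ?_
  rw [mul_pow]
  exact mul_le_mul_of_nonneg_right (treeCoeff_le_exp_one_pow n) (pow_nonneg hx0 n)

lemma le_radius_ofScalars_treeCoeff :
    ENNReal.ofReal (exp (-1)) ≤ (FormalMultilinearSeries.ofScalars ℝ treeCoeff).radius := by
  refine FormalMultilinearSeries.le_radius_of_bound _ 1 fun n => ?_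
  rw [FormalMultilinearSeries.ofScalars_norm, norm_of_nonneg (treeCoeff_nonneg n),
    coe_toNNReal _ (exp_pos _).le]
  calc treeCoeff n * exp (-1) ^ n ≤ exp 1 ^ n * exp (-1) ^ n := by
        gcongr; exact treeCoeff_le_exp_one_pow n
    _ = 1 := by rw [← mul_pow, ← exp_add]; simp

lemma analyticAt_treeFun {x : ℝ} (hx : |x| < exp (-1)) : AnalyticAt ℝ treeFun x := by
  set p := FormalMultilinearSeries.ofScalars ℝ treeCoeff
  have hsum : p.sum = treeFun := funext (FormalMultilinearSeries.ofScalars_sum_eq treeCoeff)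
  have hr := (ENNReal.ofReal_pos.mpr (exp_pos (-1))).trans_le le_radius_ofScalars_treeCoeff
  refine hsum ▸ (p.hasFPowerSeriesOnBall hr).analyticAt_of_mem ?_
  refine Metric.mem_eball.mpr (lt_of_lt_of_le ?_ le_radius_ofScalars_treeCoeff)
  rwa [edist_zero_right, ← ofReal_norm, ENNReal.ofReal_lt_ofReal_iff (exp_pos _), norm_eq_abs]

lemma hasSum_treeFun_mul_exp_neg_of_mul_exp_lt {s : ℝ} (hs0 : 0 ≤ s) (hs : s * exp s < exp (-1)) :
    HasSum (fun n => treeCoeff n * (s * exp (-s)) ^ n) s := by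
  have hrow (n : ℕ) (c : ℝ) : HasSum (fun m => treeCoeff n * (c * n) ^ m / m ! * s ^ (n + m))
      (treeCoeff n * (s * exp (c * s)) ^ n) := by
    have he : exp (c * s) ^ n = exp (c * (n * s)) := by rw [← exp_nat_mul]; ring_nf
    rw [mul_pow, he, ← mul_assoc]
    exact ((exp_eq_exp_ℝ ▸ NormedSpace.expSeries_div_hasSum_exp (c * (n * s))).mul_left
      (treeCoeff n * s ^ n)).congr_fun fun m => by ring
  set F : ℕ × ℕ → ℝ := fun p => treeCoeff p.1 * (-(p.1 : ℝ)) ^ p.2 / p.2 ! * s ^ (p.1 + p.2)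
  have hF (p : ℕ × ℕ) :
      |F p| = treeCoeff p.1 * (1 * p.1 : ℝ) ^ p.2 / p.2 ! * s ^ (p.1 + p.2) := by
    simp only [F, abs_mul, abs_div, abs_pow, abs_neg, Nat.abs_cast, abs_of_nonneg hs0,
      abs_of_nonneg (treeCoeff_nonneg _), one_mul]
  have habs : Summable fun p => |F p| := by
    refine (summable_prod_of_nonneg fun _ => abs_nonneg _).mpr ⟨fun n => ?_, ?_⟩
    · simpa only [hF] using (hrow n 1).summable
    · refine (summable_treeCoeff_mul_pow (by positivity) hs).congr fun n => ?_
      rw [tsum_congr fun m => hF (n, m), (hrow n 1).tsum_eq, one_mul]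
  have hdiag (N : ℕ) : ∑ p ∈ antidiagonal N, F p = if N = 1 then s else 0 := by
    calc ∑ p ∈ antidiagonal N, F p
        = s ^ N * ∑ p ∈ antidiagonal N, treeCoeff p.1 * (-(p.1 : ℝ)) ^ p.2 / p.2 ! := by
          rw [mul_sum]
          exact sum_congr rfl fun p hp => by rw [← mem_antidiagonal.mp hp]; ring
      _ = if N = 1 then s else 0 := by
          rw [sum_antidiagonal_treeCoeff_mul_neg_pow]
          split_ifs with hN <;> simp [hN]
  have hsum := habs.of_abs.hasSum
  have hrows := hsum.prod_fiberwise fun n => by simpa only [neg_one_mul] using hrow n (-1)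
  have hdiags : HasSum (fun N => if N = 1 then s else 0) (∑' p, F p) := by
    simpa only [hdiag] using hsum.sum_antidiagonal
  rwa [hdiags.unique (hasSum_ite_eq 1 s)] at hrows

lemma mul_exp_neg_lt_exp_neg_one {s : ℝ} (hs : s ≠ 1) : s * exp (-s) < exp (-1) := by
  calc s * exp (-s) < exp (s - 1) * exp (-s) := by
        gcongr; linarith [add_one_lt_exp (sub_ne_zero.mpr hs)]
    _ = exp (-1) := by rw [← exp_add]; ring_nf

lemma treeFun_mul_exp_neg {s : ℝ} (hs : s ∈ Set.Ioo 0 1) : treeFun (s * exp (-s)) = s := by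
  have hanalytic : AnalyticOnNhd ℝ (fun s => treeFun (s * exp (-s))) (Set.Ioo 0 1) := by
    intro s hs
    refine (analyticAt_treeFun ?_).comp (by fun_prop)
    rw [abs_of_pos (by have := hs.1; positivity)]
    exact mul_exp_neg_lt_exp_neg_one hs.2.ne
  have hexp_two : exp (-2) < 1 := exp_lt_one_iff.mpr (by norm_num)
  have hsmall : (fun s => treeFun (s * exp (-s))) =ᶠ[𝓝 (exp (-2) / 2)] id := by
    filter_upwards [Ioo_mem_nhds (half_pos (exp_pos (-2))) (half_lt_self (exp_pos (-2)))]
      with s hs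
    refine (hasSum_treeFun_mul_exp_neg_of_mul_exp_lt hs.1.le ?_).tsum_eq
    calc s * exp s < exp (-2) * exp 1 :=
          mul_lt_mul'' hs.2 (exp_lt_exp.mpr (hs.2.trans hexp_two)) hs.1.le (exp_pos s).le
      _ = exp (-1) := by rw [← exp_add]; norm_num
  exact hanalytic.eqOn_of_preconnected_of_eventuallyEq analyticOnNhd_id isPreconnected_Ioo
    ⟨by positivity, (half_lt_self (exp_pos _)).trans hexp_two⟩ hsmall hs

lemma hasSum_treeFun_exp_neg_one : HasSum (fun n => treeCoeff n * exp (-1) ^ n) 1 := by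
  have hpos (s : ℝ) (hs : s ∈ Set.Ioo 0 1) : 0 ≤ s * exp (-s) := by have := hs.1; positivity
  have hsum (s : ℝ) (hs : s ∈ Set.Ioo 0 1) : Summable fun n => treeCoeff n * (s * exp (-s)) ^ n :=
    summable_treeCoeff_mul_pow (hpos s hs) (mul_exp_neg_lt_exp_neg_one hs.2.ne)
  have hleft : Set.Ioo 0 1 ∈ 𝓝[<] (1 : ℝ) := Ioo_mem_nhdsLT one_pos
  have hid : Tendsto id (𝓝[<] (1 : ℝ)) (𝓝 1) := tendsto_id.mono_left nhdsWithin_le_nhds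
  refine hasSum_of_isLUB_of_nonneg 1
    (fun n => mul_nonneg (treeCoeff_nonneg n) (pow_nonneg (exp_pos _).le n)) ⟨?_, fun b hb => ?_⟩
  · rintro _ ⟨u, rfl⟩
    have hcont : Continuous fun s => ∑ n ∈ u, treeCoeff n * (s * exp (-s)) ^ n := by fun_prop
    have hlim : Tendsto (fun s => ∑ n ∈ u, treeCoeff n * (s * exp (-s)) ^ n) (𝓝[<] 1)
        (𝓝 (∑ n ∈ u, treeCoeff n * exp (-1) ^ n)) := by
      simpa using (hcont.tendsto 1).mono_left nhdsWithin_le_nhds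
    refine le_of_tendsto_of_tendsto hlim hid (eventually_of_mem hleft fun s hs => ?_)
    calc _ ≤ treeFun (s * exp (-s)) := (hsum s hs).sum_le_tsum u fun n _ =>
          mul_nonneg (treeCoeff_nonneg n) (pow_nonneg (hpos s hs) n)
      _ = s := treeFun_mul_exp_neg hs
  · refine le_of_tendsto hid (eventually_of_mem hleft fun s hs => ?_)
    rw [id, ← treeFun_mul_exp_neg hs]
    refine (hsum s hs).tsum_le_of_sum_le fun u => (sum_le_sum fun n _ => ?_).trans (hb ⟨u, rfl⟩)
    exact mul_le_mul_of_nonneg_left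
      (pow_le_pow_left₀ (hpos s hs) (mul_exp_neg_le_exp_neg_one s) n) (treeCoeff_nonneg n)

lemma hasSum_treeFun_mul_exp_neg {s : ℝ} (h0 : 0 < s) (h1 : s ≤ 1) :
    HasSum (fun n => treeCoeff n * (s * exp (-s)) ^ n) s := by
  rcases h1.lt_or_eq with h1 | rfl
  · convert (summable_treeCoeff_mul_pow (by positivity) (mul_exp_neg_lt_exp_neg_one h1.ne)).hasSum
    exact (treeFun_mul_exp_neg ⟨h0, h1⟩).symm
  · simpa using hasSum_treeFun_exp_neg_one

lemma exists_mem_Ioc_mul_exp_neg_eq {lam : ℝ} (hlam : 0 < lam) :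
    ∃ t ∈ Set.Ioc 0 1, t * exp (-t) = lam * exp (-lam) ∧ (lam ≤ 1 → t = lam) := by
  rcases le_or_gt lam 1 with h | h
  · exact ⟨lam, ⟨hlam, h⟩, rfl, fun _ => rfl⟩
  · have hcont : ContinuousOn (fun t : ℝ => t * exp (-t)) (Set.Icc 0 1) := by fun_prop
    have hmem : lam * exp (-lam) ∈ Set.Ioo (0 * exp (-0)) (1 * exp (-1)) :=
      ⟨by simp only [zero_mul]; positivity, by simpa using mul_exp_neg_lt_exp_neg_one h.ne'⟩
    obtain ⟨t, ht, htv⟩ := intermediate_value_Ioo zero_le_one hcont hmem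
    exact ⟨t, Set.Ioo_subset_Ioc_self ht, htv, fun h' => absurd h' h.not_ge⟩

lemma HasSum.pow_div_factorial_mul_exp {lam t : ℝ} (hlam : lam ≠ 0)
    (h : HasSum (fun n => treeCoeff n * (lam * Real.exp (-lam)) ^ n) t) :
    HasSum (fun i : ℕ => lam ^ i / i ! * ((i : ℝ) + 1) ^ (i - 1) * Real.exp (-lam * (1 + i)))
      (t / lam) := by
  have h1 := ((hasSum_nat_add_iff' 1).mpr h).div_const lam
  rw [sum_range_one, treeCoeff_zero, zero_mul, sub_zero] at h1
  refine h1.congr_fun fun i => ?_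
  rw [treeCoeff_succ, mul_pow, ← exp_nat_mul]
  rcases i with _ | i
  · field_simp
    simp
  · rw [Nat.factorial_succ (i + 1)]
    push_cast
    field_simp
    ring_nf

/-- For `λ > 0` there is a (unique) `t ∈ [0,1]` with `t·e^(-t) = λ·e^(-λ)`;
then `Σ_{i=0}^{∞} (λ^i/i!)·(i+1)^(i-1)·e^(-λ(1+i))` converges to
`T(λe^(-λ))/λ = t/λ`, and for `λ ≤ 1` one has `t = λ`, so the value is `1`. -/
theorem stmt19 (lam : ℝ) (hlam : 0 < lam) :
    ∃ t ∈ Set.Icc (0 : ℝ) 1,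
      t * Real.exp (-t) = lam * Real.exp (-lam) ∧
      HasSum
        (fun i : ℕ =>
          lam ^ i / (Nat.factorial i) * ((i : ℝ) + 1) ^ (i - 1) * Real.exp (-lam * (1 + i)))
        (t / lam) ∧
      (lam ≤ 1 → t = lam) := by
  obtain ⟨t, ⟨ht0, ht1⟩, htv, hle⟩ := exists_mem_Ioc_mul_exp_neg_eq hlam
  have hsum := hasSum_treeFun_mul_exp_neg ht0 ht1
  rw [htv] at hsum
  exact ⟨t, ⟨ht0.le, ht1⟩, htv, hsum.pow_div_factorial_mul_exp hlam.ne', hle⟩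
end
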